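/- arXiv:1607.07748 — 2 statements merged into one kernel-verified Lean document; each statement's English description precedes it below -/
import Mathlib

section
/- Let X be a connected graph and let α, β: x → y be two paths with the same starting vertex x and the same ending vertex y. Then α and β are homologous if and only if c_α = c_β. -/
/-- A graph in the sense of Sunada's topological crystallography: a set of vertices,
a set of edges, source and target maps, and a fixed-point free involution sending
each edge to its inverse. -/
structure SunadaGraph where
  V : Type
  E : Type
  s : E → V
  t : E → V
  inv : E → E
  s_inv : ∀ e, s (inv e) = t e
  t_inv : ∀ e, t (inv e) = s e
  inv_inv : ∀ e, inv (inv e) = e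
  inv_ne : ∀ e, inv e ≠ e

namespace SunadaGraph

variable (X : SunadaGraph)

/-- `X.IsPath x y γ` : the word of edges `γ` is a path from `x` to `y` in `X`. -/
inductive IsPath : X.V → X.V → List X.E → Prop
  | nil (x : X.V) : IsPath x x []
  | cons (e : X.E) {y : X.V} {γ : List X.E} (h : IsPath (X.t e) y γ) :
      IsPath (X.s e) y (e :: γ)

/-- A graph is connected if any two vertices are joined by a path. -/
def Connected : Prop := ∀ x y : X.V, ∃ γ : List X.E, X.IsPath x y γ

/-- An edge is a bridge if there is no path from its target to its source
avoiding both the edge and its inverse. -/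
def IsBridge (e : X.E) : Prop :=
  ¬ ∃ γ : List X.E, X.IsPath (X.t e) (X.s e) γ ∧ e ∉ γ ∧ X.inv e ∉ γ

/-- The space `C₁(X,ℝ)` of real 1-chains: formal linear combinations of edges
with `e⁻¹ = -e`, realized as finitely supported functions `c : E → ℝ` with
`c(e⁻¹) = - c(e)`. -/
noncomputable def C1 : Submodule ℝ (X.E →₀ ℝ) where
  carrier := {c | ∀ e, c (X.inv e) = - c e}
  add_mem' := by
    intro a b ha hb e
    simp only [Finsupp.add_apply, ha e, hb e]
    ring
  zero_mem' := by intro e; simp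
  smul_mem' := by
    intro r c hc e
    simp only [Finsupp.smul_apply, hc e, smul_eq_mul]
    ring

/-- The 1-chain associated to a single edge. -/
noncomputable def edgeChain (e : X.E) : ↥X.C1 :=
  ⟨Finsupp.single e 1 - Finsupp.single (X.inv e) 1, by
    intro f
    classical
    have h1 : (e = X.inv f) ↔ (X.inv e = f) := by
      constructor
      · rintro rfl; exact X.inv_inv f
      · rintro rfl; exact (X.inv_inv e).symm
    have h2 : (X.inv e = X.inv f) ↔ (e = f) := by
      constructor
      · intro h
        have := congrArg X.inv h
        rwa [X.inv_inv, X.inv_inv] at this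
      · rintro rfl; rfl
    simp only [Finsupp.sub_apply, Finsupp.single_apply, h1, h2]
    ring⟩

/-- The 1-chain `c_γ` of a path `γ`. -/
noncomputable def pathChain (γ : List X.E) : ↥X.C1 := (γ.map X.edgeChain).sum

/-- The inner product on `C₁(X,ℝ)` for which the edges form an orthonormal basis
(with `e⁻¹` counting as the negative of `e`). -/
noncomputable def chainInner (c d : ↥X.C1) : ℝ :=
  (1/2) * ((c : X.E →₀ ℝ).sum fun e x => x * (d : X.E →₀ ℝ) e)

/-- The boundary of a 1-chain. -/
noncomputable def boundary (c : ↥X.C1) : X.V →₀ ℝ :=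
  (c : X.E →₀ ℝ).sum fun e x => x • (Finsupp.single (X.t e) (1:ℝ) - Finsupp.single (X.s e) 1)

/-- A 1-cycle is a 1-chain with vanishing boundary. -/
def IsCycle (c : ↥X.C1) : Prop := X.boundary c = 0

/-- An integral 1-chain: all coefficients are integers. -/
def IsIntegral (c : ↥X.C1) : Prop := ∀ e, ∃ n : ℤ, (c : X.E →₀ ℝ) e = (n : ℝ)

/-- The support of a 1-chain: the set of edges with positive coefficient. -/
def chainSupp (c : ↥X.C1) : Set X.E := {e | 0 < (c : X.E →₀ ℝ) e}

/-- `p` is the orthogonal projection of `C₁(X,ℝ)` onto the space `Z₁(X,ℝ)` of 1-cycles: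
it takes values in `Z₁(X,ℝ)` and `c - p c` is orthogonal to every 1-cycle. -/
def IsOrthoProj (p : ↥X.C1 → ↥X.C1) : Prop :=
  (∀ c, X.IsCycle (p c)) ∧ (∀ c z, X.IsCycle z → X.chainInner (c - p c) z = 0)

/-- Two paths from `x` to `y` are homologous if one can be obtained from the other
by repeatedly inserting or deleting subwords `e e⁻¹`, and/or replacing a subword
`στ` by `τσ` where `σ` and `τ` are loops based at the same vertex. -/
inductive Homologous : X.V → X.V → List X.E → List X.E → Prop
  | refl {x y : X.V} (γ : List X.E) (h : X.IsPath x y γ) : Homologous x y γ γ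
  | cancel {x y : X.V} (γ δ : List X.E) (e : X.E)
      (h : X.IsPath x y (γ ++ e :: X.inv e :: δ)) (h' : X.IsPath x y (γ ++ δ)) :
      Homologous x y (γ ++ e :: X.inv e :: δ) (γ ++ δ)
  | swap {x y : X.V} (γ σ τ δ : List X.E) (v : X.V)
      (hσ : X.IsPath v v σ) (hτ : X.IsPath v v τ)
      (h : X.IsPath x y (γ ++ (σ ++ (τ ++ δ))))
      (h' : X.IsPath x y (γ ++ (τ ++ (σ ++ δ)))) :
      Homologous x y (γ ++ (σ ++ (τ ++ δ))) (γ ++ (τ ++ (σ ++ δ)))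
  | symm {x y : X.V} {a b : List X.E} (h : Homologous x y a b) : Homologous x y b a
  | trans {x y : X.V} {a b c : List X.E} (h1 : Homologous x y a b)
      (h2 : Homologous x y b c) : Homologous x y a c

/-- A simple path: no vertex is visited twice. -/
def IsSimplePath (x y : X.V) (γ : List X.E) : Prop :=
  X.IsPath x y γ ∧ (x :: γ.map X.t).Nodup

/-- A simple loop based at `x`: a loop in which every vertex other than `x` occurs
at most once and `x` occurs only as the initial and final vertex. -/
def IsSimpleLoop (x : X.V) (γ : List X.E) : Prop :=
  X.IsPath x x γ ∧ (x :: (γ.map X.t).dropLast).Nodup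

/-- A reduced word: no subword of the form `e e⁻¹`. -/
def Reduced (γ : List X.E) : Prop := γ.Chain' (fun a b => b ≠ X.inv a)

/-- A spanning tree: a set of edges, closed under inversion, such that the spanning
subgraph it determines is connected and has no nonempty reduced loops. -/
def IsSpanningTree (S : Set X.E) : Prop :=
  (∀ e ∈ S, X.inv e ∈ S) ∧
  (∀ x y : X.V, ∃ γ : List X.E, X.IsPath x y γ ∧ ∀ e ∈ γ, e ∈ S) ∧
  (∀ (x : X.V) (γ : List X.E), X.IsPath x x γ → (∀ e ∈ γ, e ∈ S) → X.Reduced γ → γ = [])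

/-- The quotient of a set of 1-chains by the translation action of the
integral 1-cycles. -/
def transQuot (S : Set ↥X.C1) : Type :=
  Quot (fun a b : S => ∃ z : ↥X.C1, X.IsCycle z ∧ X.IsIntegral z ∧ (b : ↥X.C1) = (a : ↥X.C1) + z)

end SunadaGraph

/-!
Homology moves preserve the 1-chain: `e e⁻¹` contributes `e - e = 0`, and swapping two subwords
does not change the sum. Conversely, fix paths `p v : x → v` and attach to each edge `e` the loop
`p(s e) e p(t e)⁻¹` at `x`. Every loop at `x` is homologous to the product of the loops of its
edges; these commute, being based at the same vertex, and the loops of `e` and `e⁻¹` cancel. A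
loop with chain `0` contains each edge as often as its inverse, so its edge loops cancel in pairs.
Applied to the loop `α β⁻¹` this gives `α ~ α β⁻¹ β ~ β`.
-/

namespace SunadaGraph

variable {X : SunadaGraph}

theorem inv_involutive : Function.Involutive X.inv := X.inv_inv

theorem IsPath.append {x y z : X.V} {a b : List X.E} (ha : X.IsPath x y a)
    (hb : X.IsPath y z b) : X.IsPath x z (a ++ b) := by
  induction ha with
  | nil => exact hb
  | cons e _ ih => exact IsPath.cons e (ih hb)

theorem IsPath.singleton (e : X.E) : X.IsPath (X.s e) (X.t e) [e] :=
  IsPath.cons e (IsPath.nil _)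

variable (X) in
def reverse (γ : List X.E) : List X.E := (γ.map X.inv).reverse

@[simp] theorem reverse_nil : X.reverse [] = [] := rfl

@[simp] theorem reverse_cons (e : X.E) (γ : List X.E) :
    X.reverse (e :: γ) = X.reverse γ ++ [X.inv e] := by
  simp [reverse]

@[simp] theorem reverse_append (a b : List X.E) :
    X.reverse (a ++ b) = X.reverse b ++ X.reverse a := by
  simp [reverse]

@[simp] theorem reverse_reverse (γ : List X.E) : X.reverse (X.reverse γ) = γ := by
  simp [reverse, List.map_reverse, Function.comp_def, X.inv_inv]

theorem IsPath.singleton_inv (e : X.E) : X.IsPath (X.t e) (X.s e) [X.inv e] := by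
  simpa only [X.s_inv, X.t_inv] using IsPath.singleton (X.inv e)

theorem IsPath.reverse {x y : X.V} {γ : List X.E} (h : X.IsPath x y γ) :
    X.IsPath y x (X.reverse γ) := by
  induction h with
  | nil x => exact IsPath.nil x
  | cons e _ ih => simpa using ih.append (IsPath.singleton_inv e)

theorem Homologous.whisker {x y w z : X.V} {a b p q : List X.E} (h : X.Homologous x y a b)
    (hp : X.IsPath w x p) (hq : X.IsPath y z q) :
    X.Homologous w z (p ++ (a ++ q)) (p ++ (b ++ q)) := by
  induction h with
  | refl γ hγ => exact Homologous.refl _ (hp.append (hγ.append hq))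
  | cancel γ δ e h h' =>
    simpa using Homologous.cancel (p ++ γ) (δ ++ q) e
      (by simpa using hp.append (h.append hq)) (by simpa using hp.append (h'.append hq))
  | swap γ σ τ δ v hσ hτ h h' =>
    simpa using Homologous.swap (p ++ γ) σ τ (δ ++ q) v hσ hτ
      (by simpa using hp.append (h.append hq)) (by simpa using hp.append (h'.append hq))
  | symm _ ih => exact ih.symm
  | trans _ _ ih₁ ih₂ => exact ih₁.trans ih₂

theorem homologous_edge_inv (e : X.E) : X.Homologous (X.s e) (X.s e) [e, X.inv e] [] :=
  Homologous.cancel [] [] e ((IsPath.singleton e).append (IsPath.singleton_inv e)) (IsPath.nil _)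

theorem homologous_append_reverse {x y : X.V} {γ : List X.E} (h : X.IsPath x y γ) :
    X.Homologous x x (γ ++ X.reverse γ) [] := by
  induction h with
  | nil x => exact Homologous.refl [] (IsPath.nil x)
  | cons e _ ih =>
    have hwhisker := ih.whisker (IsPath.singleton e) (IsPath.singleton_inv e)
    simpa using hwhisker.trans (homologous_edge_inv e)

theorem homologous_reverse_append {x y : X.V} {γ : List X.E} (h : X.IsPath x y γ) :
    X.Homologous y y (X.reverse γ ++ γ) [] := by
  simpa using homologous_append_reverse h.reverse

theorem homologous_of_append_reverse {x y : X.V} {α β : List X.E} (hα : X.IsPath x y α)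
    (hβ : X.IsPath x y β) (h : X.Homologous x x (α ++ X.reverse β) []) :
    X.Homologous x y α β := by
  have hinsert := (homologous_reverse_append hβ).symm.whisker hα (IsPath.nil y)
  have hcollapse := h.whisker (IsPath.nil x) hβ
  simp only [List.append_nil, List.nil_append, List.append_assoc] at hinsert hcollapse
  exact hinsert.trans hcollapse

@[simp] theorem pathChain_nil : X.pathChain [] = 0 := rfl

theorem pathChain_cons (e : X.E) (γ : List X.E) :
    X.pathChain (e :: γ) = X.edgeChain e + X.pathChain γ := by
  simp [pathChain]

theorem pathChain_append (a b : List X.E) :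
    X.pathChain (a ++ b) = X.pathChain a + X.pathChain b := by
  simp [pathChain]

theorem edgeChain_inv (e : X.E) : X.edgeChain (X.inv e) = -X.edgeChain e := by
  ext f
  simp [edgeChain, X.inv_inv]

theorem pathChain_reverse (γ : List X.E) : X.pathChain (X.reverse γ) = -X.pathChain γ := by
  induction γ with
  | nil => exact (neg_zero (G := X.C1)).symm
  | cons e γ ih =>
    rw [reverse_cons, pathChain_append, ih, pathChain_cons, pathChain_cons, pathChain_nil,
      edgeChain_inv]
    abel

theorem Homologous.pathChain_eq {x y : X.V} {a b : List X.E} (h : X.Homologous x y a b) :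
    X.pathChain a = X.pathChain b := by
  induction h with
  | refl => rfl
  | cancel γ δ e =>
    simp only [pathChain_append, pathChain_cons, edgeChain_inv]
    abel
  | swap =>
    simp only [pathChain_append]
    abel
  | symm _ ih => exact ih.symm
  | trans _ _ ih₁ ih₂ => exact ih₁.trans ih₂

theorem coe_pathChain_apply [DecidableEq X.E] (γ : List X.E) (f : X.E) :
    (X.pathChain γ : X.E →₀ ℝ) f = γ.count f - γ.count (X.inv f) := by
  induction γ with
  | nil => simp [pathChain]
  | cons e γ ih =>
    simp only [pathChain_cons, Submodule.coe_add, Finsupp.add_apply, ih, List.count_cons,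
      beq_iff_eq, edgeChain, Finsupp.sub_apply, Finsupp.single_apply, inv_involutive.eq_iff]
    push_cast
    ring

theorem map_inv_perm_of_pathChain_eq_zero {γ : List X.E} (h : X.pathChain γ = 0) :
    (γ.map X.inv).Perm γ := by
  classical
  refine List.perm_iff_count.mpr fun f => ?_
  have hf := coe_pathChain_apply γ f
  rw [h, ZeroMemClass.coe_zero, Finsupp.coe_zero, Pi.zero_apply] at hf
  rw [← inv_involutive f, List.count_map_of_injective _ _ inv_involutive.injective,
    inv_involutive f]
  exact_mod_cast (sub_eq_zero.mp hf.symm).symm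

section FundamentalLoop

variable {x : X.V} {p : X.V → List X.E}

variable (X) in
def fundamentalLoop (p : X.V → List X.E) (e : X.E) : List X.E :=
  p (X.s e) ++ e :: X.reverse (p (X.t e))

theorem isPath_fundamentalLoop (hp : ∀ v, X.IsPath x v (p v)) (e : X.E) :
    X.IsPath x x (X.fundamentalLoop p e) :=
  (hp _).append ((IsPath.singleton e).append (hp _).reverse)

theorem isPath_flatMap_fundamentalLoop (hp : ∀ v, X.IsPath x v (p v)) (l : List X.E) :
    X.IsPath x x (l.flatMap (X.fundamentalLoop p)) := by
  induction l with
  | nil => exact IsPath.nil x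
  | cons e l ih => exact (isPath_fundamentalLoop hp e).append ih

theorem homologous_flatMap_fundamentalLoop (hp : ∀ v, X.IsPath x v (p v)) {v y : X.V}
    {γ : List X.E} (hγ : X.IsPath v y γ) :
    X.Homologous x y (p v ++ γ) (γ.flatMap (X.fundamentalLoop p) ++ p y) := by
  induction hγ with
  | nil v => simpa using Homologous.refl (p v) (hp v)
  | cons e hγ ih =>
    have hinsert := (homologous_reverse_append (hp (X.t e))).symm.whisker
      ((hp _).append (IsPath.singleton e)) hγ
    have hrest := ih.whisker (isPath_fundamentalLoop hp e) (IsPath.nil _)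
    simp only [fundamentalLoop, List.flatMap_cons, List.nil_append, List.append_assoc,
      List.append_nil, List.cons_append] at hinsert hrest ⊢
    exact hinsert.trans hrest

theorem fundamentalLoop_append_fundamentalLoop_inv (hp : ∀ v, X.IsPath x v (p v)) (e : X.E) :
    X.Homologous x x (X.fundamentalLoop p e ++ X.fundamentalLoop p (X.inv e)) [] := by
  -- with `μ = p(t e) e⁻¹ : x → s e` the product is `p(s e) μ⁻¹ μ p(s e)⁻¹`
  have hμ := (hp (X.t e)).append (IsPath.singleton_inv e)
  have hcancel := (homologous_reverse_append hμ).whisker (hp (X.s e)) (hp (X.s e)).reverse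
  simp only [fundamentalLoop, X.s_inv, X.t_inv, reverse_append, reverse_cons, reverse_nil,
    X.inv_inv, List.nil_append, List.append_assoc, List.cons_append] at hcancel ⊢
  exact hcancel.trans (homologous_append_reverse (hp (X.s e)))

theorem Homologous.flatMap_fundamentalLoop_of_perm (hp : ∀ v, X.IsPath x v (p v))
    {l l' : List X.E} (h : l.Perm l') :
    X.Homologous x x (l.flatMap (X.fundamentalLoop p)) (l'.flatMap (X.fundamentalLoop p)) := by
  induction h with
  | nil => exact Homologous.refl [] (IsPath.nil x)
  | cons e _ ih => simpa using ih.whisker (isPath_fundamentalLoop hp e) (IsPath.nil x)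
  | swap e f l =>
    have hσ := isPath_fundamentalLoop hp f
    have hτ := isPath_fundamentalLoop hp e
    have hδ := isPath_flatMap_fundamentalLoop hp l
    simpa using Homologous.swap [] _ _ _ x hσ hτ
      (hσ.append (hτ.append hδ)) (hτ.append (hσ.append hδ))
  | trans _ _ ih₁ ih₂ => exact ih₁.trans ih₂

theorem flatMap_fundamentalLoop_homologous_nil (hp : ∀ v, X.IsPath x v (p v)) :
    ∀ l : List X.E, (l.map X.inv).Perm l → X.Homologous x x (l.flatMap (X.fundamentalLoop p)) []
  | [], _ => Homologous.refl [] (IsPath.nil x)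
  | e :: l, hl => by
    have hmem : X.inv e ∈ l := by
      have : X.inv e ∈ e :: l := hl.subset (List.mem_map_of_mem (List.mem_cons_self ..))
      exact (List.mem_cons.mp this).resolve_left (X.inv_ne e)
    obtain ⟨s, t, rfl⟩ := List.append_of_mem hmem
    have hperm : (e :: (s ++ X.inv e :: t)).Perm (e :: X.inv e :: (s ++ t)) :=
      List.perm_middle.cons e
    have hr : ((s ++ t).map X.inv).Perm (s ++ t) := by
      have h := ((hperm.map X.inv).symm.trans hl).trans hperm
      simp only [List.map_cons, X.inv_inv] at h
      exact (List.perm_cons _).mp ((List.perm_cons _).mp ((List.Perm.swap _ _ _).trans h))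
    have hpair := (fundamentalLoop_append_fundamentalLoop_inv hp e).whisker (IsPath.nil x)
      (isPath_flatMap_fundamentalLoop hp (s ++ t))
    simp only [List.nil_append, List.append_assoc] at hpair
    refine (Homologous.flatMap_fundamentalLoop_of_perm hp hperm).trans ?_
    simpa using hpair.trans (flatMap_fundamentalLoop_homologous_nil hp (s ++ t) hr)
termination_by l => l.length
decreasing_by subst_vars; simp only [List.length_append, List.length_cons]; omega

end FundamentalLoop

theorem exists_pathSystem (hconn : X.Connected) (x : X.V) :
    ∃ p : X.V → List X.E, p x = [] ∧ ∀ v, X.IsPath x v (p v) := by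
  classical
  choose q hq using hconn x
  refine ⟨Function.update q x [], Function.update_self .., fun v => ?_⟩
  by_cases hv : v = x
  · subst hv
    simpa using IsPath.nil v
  · simpa [hv] using hq v

theorem homologous_nil_of_pathChain_eq_zero (hconn : X.Connected) {x : X.V} {γ : List X.E}
    (hγ : X.IsPath x x γ) (h : X.pathChain γ = 0) : X.Homologous x x γ [] := by
  obtain ⟨p, hpx, hp⟩ := exists_pathSystem hconn x
  have hloops := homologous_flatMap_fundamentalLoop hp hγ
  rw [hpx, List.nil_append, List.append_nil] at hloops
  exact hloops.trans
    (flatMap_fundamentalLoop_homologous_nil hp γ (map_inv_perm_of_pathChain_eq_zero h))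

end SunadaGraph

/-- Lemma: homologous iff equal 1-chains.  In a connected graph,
two paths `α β : x → y` are homologous if and only if `c_α = c_β`. -/
theorem homologous_iff_pathChain_eq (X : SunadaGraph) (hconn : X.Connected)
    (x y : X.V) (α β : List X.E) (hα : X.IsPath x y α) (hβ : X.IsPath x y β) :
    X.Homologous x y α β ↔ X.pathChain α = X.pathChain β := by
  refine ⟨SunadaGraph.Homologous.pathChain_eq, fun h => ?_⟩
  have hloop : X.pathChain (α ++ X.reverse β) = 0 := by
    rw [SunadaGraph.pathChain_append, SunadaGraph.pathChain_reverse, h]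
    exact add_neg_cancel (X.pathChain β)
  exact SunadaGraph.homologous_of_append_reverse hα hβ
    (SunadaGraph.homologous_nil_of_pathChain_eq_zero hconn (hα.append hβ.reverse) hloop)
end

section
/- Let X be a connected graph with basepoint x₀. The map sending a pair (f, ⟦β⟧), where f ∈ Aut(X) and β: x₀ → f(x₀) is a path, to the automorphism of X̄ that maps each atom ⟦α⟧: x₀ → x to the atom ⟦β f(α)⟧: x₀ → f(x) and each edge (⟦α⟧, e) to the edge (⟦β f(α)⟧, f(e)), is a bijection from the set of such pairs onto Cov(X). -/
/-- A graph in the sense of Sunada's topological crystallography: a set of vertices,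
a set of edges, source and target maps, and a fixed-point free involution sending
each edge to its inverse. -/
structure SGraph where
  V : Type
  E : Type
  s : E → V
  t : E → V
  inv : E → E
  s_inv : ∀ e, s (inv e) = t e
  t_inv : ∀ e, t (inv e) = s e
  inv_inv : ∀ e, inv (inv e) = e
  inv_ne : ∀ e, inv e ≠ e

namespace SGraph

variable (X : SGraph)

/-- `X.IsPath x y γ` : the word of edges `γ` is a path from `x` to `y` in `X`. -/
inductive IsPath : X.V → X.V → List X.E → Prop
  | nil (x : X.V) : IsPath x x []
  | cons (e : X.E) {y : X.V} {γ : List X.E} (h : IsPath (X.t e) y γ) :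
      IsPath (X.s e) y (e :: γ)

/-- A graph is connected if any two vertices are joined by a path. -/
def Connected : Prop := ∀ x y : X.V, ∃ γ : List X.E, X.IsPath x y γ

/-- An edge is a bridge if there is no path from its target to its source
avoiding both the edge and its inverse. -/
def IsBridge (e : X.E) : Prop :=
  ¬ ∃ γ : List X.E, X.IsPath (X.t e) (X.s e) γ ∧ e ∉ γ ∧ X.inv e ∉ γ

/-- The space `C₁(X,ℝ)` of real 1-chains: formal linear combinations of edges
with `e⁻¹ = -e`, realized as finitely supported functions `c : E → ℝ` with
`c(e⁻¹) = - c(e)`. -/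
noncomputable def C1 : Submodule ℝ (X.E →₀ ℝ) where
  carrier := {c | ∀ e, c (X.inv e) = - c e}
  add_mem' := by
    intro a b ha hb e
    simp only [Finsupp.add_apply, ha e, hb e]
    ring
  zero_mem' := by intro e; simp
  smul_mem' := by
    intro r c hc e
    simp only [Finsupp.smul_apply, hc e, smul_eq_mul]
    ring

/-- The 1-chain associated to a single edge. -/
noncomputable def edgeChain (e : X.E) : ↥X.C1 :=
  ⟨Finsupp.single e 1 - Finsupp.single (X.inv e) 1, by
    intro f
    classical
    have h1 : (e = X.inv f) ↔ (X.inv e = f) := by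
      constructor
      · rintro rfl; exact X.inv_inv f
      · rintro rfl; exact (X.inv_inv e).symm
    have h2 : (X.inv e = X.inv f) ↔ (e = f) := by
      constructor
      · intro h
        have := congrArg X.inv h
        rwa [X.inv_inv, X.inv_inv] at this
      · rintro rfl; rfl
    simp only [Finsupp.sub_apply, Finsupp.single_apply, h1, h2]
    ring⟩

/-- The 1-chain `c_γ` of a path `γ`. -/
noncomputable def pathChain (γ : List X.E) : ↥X.C1 := (γ.map X.edgeChain).sum

/-- The inner product on `C₁(X,ℝ)` for which the edges form an orthonormal basis
(with `e⁻¹` counting as the negative of `e`). -/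
noncomputable def chainInner (c d : ↥X.C1) : ℝ :=
  (1/2) * ((c : X.E →₀ ℝ).sum fun e x => x * (d : X.E →₀ ℝ) e)

/-- The boundary of a 1-chain. -/
noncomputable def boundary (c : ↥X.C1) : X.V →₀ ℝ :=
  (c : X.E →₀ ℝ).sum fun e x => x • (Finsupp.single (X.t e) (1:ℝ) - Finsupp.single (X.s e) 1)

/-- A 1-cycle is a 1-chain with vanishing boundary. -/
def IsCycle (c : ↥X.C1) : Prop := X.boundary c = 0

/-- An integral 1-chain: all coefficients are integers. -/
def IsIntegral (c : ↥X.C1) : Prop := ∀ e, ∃ n : ℤ, (c : X.E →₀ ℝ) e = (n : ℝ)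

/-- The support of a 1-chain: the set of edges with positive coefficient. -/
def chainSupp (c : ↥X.C1) : Set X.E := {e | 0 < (c : X.E →₀ ℝ) e}

/-- `p` is the orthogonal projection of `C₁(X,ℝ)` onto the space `Z₁(X,ℝ)` of 1-cycles:
it takes values in `Z₁(X,ℝ)` and `c - p c` is orthogonal to every 1-cycle. -/
def IsOrthoProj (p : ↥X.C1 → ↥X.C1) : Prop :=
  (∀ c, X.IsCycle (p c)) ∧ (∀ c z, X.IsCycle z → X.chainInner (c - p c) z = 0)

/-- Two paths from `x` to `y` are homologous if one can be obtained from the other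
by repeatedly inserting or deleting subwords `e e⁻¹`, and/or replacing a subword
`στ` by `τσ` where `σ` and `τ` are loops based at the same vertex. -/
inductive Homologous : X.V → X.V → List X.E → List X.E → Prop
  | refl {x y : X.V} (γ : List X.E) (h : X.IsPath x y γ) : Homologous x y γ γ
  | cancel {x y : X.V} (γ δ : List X.E) (e : X.E)
      (h : X.IsPath x y (γ ++ e :: X.inv e :: δ)) (h' : X.IsPath x y (γ ++ δ)) :
      Homologous x y (γ ++ e :: X.inv e :: δ) (γ ++ δ)
  | swap {x y : X.V} (γ σ τ δ : List X.E) (v : X.V)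
      (hσ : X.IsPath v v σ) (hτ : X.IsPath v v τ)
      (h : X.IsPath x y (γ ++ (σ ++ (τ ++ δ))))
      (h' : X.IsPath x y (γ ++ (τ ++ (σ ++ δ)))) :
      Homologous x y (γ ++ (σ ++ (τ ++ δ))) (γ ++ (τ ++ (σ ++ δ)))
  | symm {x y : X.V} {a b : List X.E} (h : Homologous x y a b) : Homologous x y b a
  | trans {x y : X.V} {a b c : List X.E} (h1 : Homologous x y a b)
      (h2 : Homologous x y b c) : Homologous x y a c

/-- A simple path: no vertex is visited twice. -/
def IsSimplePath (x y : X.V) (γ : List X.E) : Prop :=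
  X.IsPath x y γ ∧ (x :: γ.map X.t).Nodup

/-- A simple loop based at `x`: a loop in which every vertex other than `x` occurs
at most once and `x` occurs only as the initial and final vertex. -/
def IsSimpleLoop (x : X.V) (γ : List X.E) : Prop :=
  X.IsPath x x γ ∧ (x :: (γ.map X.t).dropLast).Nodup

/-- A reduced word: no subword of the form `e e⁻¹`. -/
def Reduced (γ : List X.E) : Prop := γ.Chain' (fun a b => b ≠ X.inv a)

/-- A spanning tree: a set of edges, closed under inversion, such that the spanning
subgraph it determines is connected and has no nonempty reduced loops. -/
def IsSpanningTree (S : Set X.E) : Prop :=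
  (∀ e ∈ S, X.inv e ∈ S) ∧
  (∀ x y : X.V, ∃ γ : List X.E, X.IsPath x y γ ∧ ∀ e ∈ γ, e ∈ S) ∧
  (∀ (x : X.V) (γ : List X.E), X.IsPath x x γ → (∀ e ∈ γ, e ∈ S) → X.Reduced γ → γ = [])

/-- The quotient of a set of 1-chains by the translation action of the
integral 1-cycles. -/
def transQuot (S : Set ↥X.C1) : Type :=
  Quot (fun a b : S => ∃ z : ↥X.C1, X.IsCycle z ∧ X.IsIntegral z ∧ (b : ↥X.C1) = (a : ↥X.C1) + z)

end SGraph
namespace SGraph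

section Lemmas

variable {X : SGraph}

/-- Concatenation of paths. -/
theorem IsPath.append {x y z : X.V} {γ δ : List X.E}
    (h1 : X.IsPath x y γ) : X.IsPath y z δ → X.IsPath x z (γ ++ δ) := by
  induction h1 with
  | nil _ => intro h2; simpa using h2
  | cons e h ih => intro h2; exact .cons e (ih h2)

theorem isPath_single (X : SGraph) (e : X.E) : X.IsPath (X.s e) (X.t e) [e] :=
  .cons e (.nil _)

theorem isPath_single' (X : SGraph) (e : X.E) : X.IsPath (X.t e) (X.s e) [X.inv e] := by
  have := X.isPath_single (X.inv e)
  rwa [X.s_inv, X.t_inv] at this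

/-- The endpoint of a path starting at `x`. -/
def endFrom (X : SGraph) (x : X.V) (γ : List X.E) : X.V := γ.foldl (fun _ e => X.t e) x

theorem IsPath.endFrom_eq {x y : X.V} {γ : List X.E} (h : X.IsPath x y γ) :
    X.endFrom x γ = y := by
  induction h with
  | nil x => rfl
  | cons e h ih => exact ih

/-- Homologous paths are paths with the same endpoints. -/
theorem Homologous.isPath {x y : X.V} {a b : List X.E} (h : X.Homologous x y a b) :
    X.IsPath x y a ∧ X.IsPath x y b := by
  induction h with
  | refl γ h => exact ⟨h, h⟩
  | cancel γ δ e h h' => exact ⟨h, h'⟩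
  | swap γ σ τ δ v hσ hτ h h' => exact ⟨h, h'⟩
  | symm h ih => exact ⟨ih.2, ih.1⟩
  | trans h1 h2 ih1 ih2 => exact ⟨ih1.1, ih2.2⟩

/-- Appending a fixed path preserves homology. -/
theorem Homologous.append_right {x y z : X.V} {a b c : List X.E}
    (h : X.Homologous x y a b) (hc : X.IsPath y z c) :
    X.Homologous x z (a ++ c) (b ++ c) := by
  induction h with
  | refl γ hγ => exact .refl _ (hγ.append hc)
  | cancel γ δ e h h' =>
      have h1 : X.IsPath x z (γ ++ e :: X.inv e :: (δ ++ c)) := by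
        have := h.append hc; simpa using this
      have h2 : X.IsPath x z (γ ++ (δ ++ c)) := by
        have := h'.append hc; simpa using this
      have := Homologous.cancel γ (δ ++ c) e h1 h2
      simpa using this
  | swap γ σ τ δ v hσ hτ h h' =>
      have h1 : X.IsPath x z (γ ++ (σ ++ (τ ++ (δ ++ c)))) := by
        have := h.append hc; simpa using this
      have h2 : X.IsPath x z (γ ++ (τ ++ (σ ++ (δ ++ c)))) := by
        have := h'.append hc; simpa using this
      have := Homologous.swap γ σ τ (δ ++ c) v hσ hτ h1 h2
      simpa using this
  | symm h ih => exact ih.symm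
  | trans h1 h2 ih1 ih2 => exact ih1.trans ih2

/-- Prepending a fixed path preserves homology. -/
theorem Homologous.prepend_left {w x y : X.V} {a b c : List X.E}
    (hc : X.IsPath w x c) (h : X.Homologous x y a b) :
    X.Homologous w y (c ++ a) (c ++ b) := by
  induction h with
  | refl γ hγ => exact .refl _ (hc.append hγ)
  | cancel γ δ e h h' =>
      have h1 : X.IsPath w y ((c ++ γ) ++ e :: X.inv e :: δ) := by
        have := hc.append h; simpa using this
      have h2 : X.IsPath w y ((c ++ γ) ++ δ) := by
        have := hc.append h'; simpa using this
      have := Homologous.cancel (c ++ γ) δ e h1 h2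
      simpa using this
  | swap γ σ τ δ v hσ hτ h h' =>
      have h1 : X.IsPath w y ((c ++ γ) ++ (σ ++ (τ ++ δ))) := by
        have := hc.append h; simpa using this
      have h2 : X.IsPath w y ((c ++ γ) ++ (τ ++ (σ ++ δ))) := by
        have := hc.append h'; simpa using this
      have := Homologous.swap (c ++ γ) σ τ δ v hσ hτ h1 h2
      simpa using this
  | symm h ih => exact ih.symm
  | trans h1 h2 ih1 ih2 => exact ih1.trans ih2

/-- The reverse of a word of edges: reverse the order and invert each edge. -/
def revP (X : SGraph) (γ : List X.E) : List X.E := (γ.map X.inv).reverse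

theorem IsPath.revP {x y : X.V} {γ : List X.E} (h : X.IsPath x y γ) :
    X.IsPath y x (X.revP γ) := by
  induction h with
  | nil x => exact .nil x
  | cons e h ih =>
      have := ih.append (X.isPath_single' e)
      simpa [SGraph.revP] using this

theorem Homologous.revP {x y : X.V} {a b : List X.E} (h : X.Homologous x y a b) :
    X.Homologous y x (X.revP a) (X.revP b) := by
  induction h with
  | refl γ hγ => exact .refl _ hγ.revP
  | cancel γ δ e h h' =>
      have key : X.revP (γ ++ e :: X.inv e :: δ) = X.revP δ ++ e :: X.inv e :: X.revP γ := by
        simp [SGraph.revP, X.inv_inv]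
      have key2 : X.revP (γ ++ δ) = X.revP δ ++ X.revP γ := by
        simp [SGraph.revP]
      have p1 : X.IsPath y x (X.revP δ ++ e :: X.inv e :: X.revP γ) := by
        have := h.revP; rwa [key] at this
      have p2 : X.IsPath y x (X.revP δ ++ X.revP γ) := by
        have := h'.revP; rwa [key2] at this
      rw [key, key2]
      exact Homologous.cancel _ _ _ p1 p2
  | swap γ σ τ δ v hσ hτ h h' =>
      have key : X.revP (γ ++ (σ ++ (τ ++ δ)))
          = X.revP δ ++ (X.revP τ ++ (X.revP σ ++ X.revP γ)) := by
        simp [SGraph.revP]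
      have key2 : X.revP (γ ++ (τ ++ (σ ++ δ)))
          = X.revP δ ++ (X.revP σ ++ (X.revP τ ++ X.revP γ)) := by
        simp [SGraph.revP]
      have p1 : X.IsPath y x (X.revP δ ++ (X.revP τ ++ (X.revP σ ++ X.revP γ))) := by
        have := h.revP; rwa [key] at this
      have p2 : X.IsPath y x (X.revP δ ++ (X.revP σ ++ (X.revP τ ++ X.revP γ))) := by
        have := h'.revP; rwa [key2] at this
      rw [key, key2]
      exact Homologous.swap _ _ _ _ v hτ.revP hσ.revP p1 p2
  | symm h ih => exact ih.symm
  | trans h1 h2 ih1 ih2 => exact ih1.trans ih2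

/-- `γ⁻¹ γ` is homologous to the trivial path. -/
theorem homologous_revP_append {x y : X.V} {γ : List X.E} (h : X.IsPath x y γ) :
    X.Homologous y y (X.revP γ ++ γ) [] := by
  induction h with
  | nil x => exact .refl [] (.nil x)
  | @cons e y' γ' h ih =>
      have p0 : X.IsPath (X.t e) y' (X.inv e :: e :: γ') := by
        have tail : X.IsPath (X.t (X.inv e)) y' (e :: γ') := by
          rw [X.t_inv]; exact .cons e h
        have := IsPath.cons (X.inv e) tail
        rwa [X.s_inv] at this
      have p1 : X.IsPath y' y' (X.revP γ' ++ X.inv e :: e :: γ') := h.revP.append p0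
      have p2 : X.IsPath y' y' (X.revP γ' ++ γ') := h.revP.append h
      have step : X.Homologous y' y' (X.revP γ' ++ X.inv e :: e :: γ') (X.revP γ' ++ γ') := by
        have := Homologous.cancel (X.revP γ') γ' (X.inv e)
          (by rwa [X.inv_inv]) (by exact p2)
        rwa [X.inv_inv] at this
      have goal_eq : X.revP (e :: γ') ++ e :: γ' = X.revP γ' ++ X.inv e :: e :: γ' := by
        simp [SGraph.revP]
      rw [goal_eq]
      exact step.trans ih

end Lemmas

end SGraph
namespace SGraph

/-- A map of graphs. -/
structure Hom (X Y : SGraph) where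
  vMap : X.V → Y.V
  eMap : X.E → Y.E
  map_s : ∀ e, Y.s (eMap e) = vMap (X.s e)
  map_t : ∀ e, Y.t (eMap e) = vMap (X.t e)
  map_inv : ∀ e, Y.inv (eMap e) = eMap (X.inv e)

/-- Composition of maps of graphs. -/
def Hom.comp {X Y Z : SGraph} (f : Hom Y Z) (g : Hom X Y) : Hom X Z where
  vMap := fun v => f.vMap (g.vMap v)
  eMap := fun e => f.eMap (g.eMap e)
  map_s := fun e => by rw [f.map_s, g.map_s]
  map_t := fun e => by rw [f.map_t, g.map_t]
  map_inv := fun e => by rw [f.map_inv, g.map_inv]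

/-- The identity map of graphs. -/
def Hom.idHom (X : SGraph) : Hom X X :=
  ⟨fun v => v, fun e => e, fun _ => rfl, fun _ => rfl, fun _ => rfl⟩

theorem IsPath.map {X Y : SGraph} {x y : X.V} {γ : List X.E}
    (h : X.IsPath x y γ) (f : Hom X Y) :
    Y.IsPath (f.vMap x) (f.vMap y) (γ.map f.eMap) := by
  induction h with
  | nil x => exact .nil _
  | cons e h ih =>
      rw [← f.map_t] at ih
      have := IsPath.cons (f.eMap e) ih
      rwa [f.map_s] at this

/-- An automorphism of a graph. -/
structure Aut (X : SGraph) where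
  toHom : Hom X X
  invHom : Hom X X
  left_inv : Hom.comp invHom toHom = Hom.idHom X
  right_inv : Hom.comp toHom invHom = Hom.idHom X

theorem Aut.ext' {X : SGraph} {f g : Aut X} (h : f.toHom = g.toHom) : f = g := by
  obtain ⟨ft, fi, fl, fr⟩ := f
  obtain ⟨gt, gi, gl, gr⟩ := g
  simp only at h
  subst h
  have key : fi = gi := by
    calc fi = Hom.comp fi (Hom.idHom X) := rfl
      _ = Hom.comp fi (Hom.comp ft gi) := by rw [gr]
      _ = Hom.comp (Hom.comp fi ft) gi := rfl
      _ = Hom.comp (Hom.idHom X) gi := by rw [fl]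
      _ = gi := rfl
  subst key
  rfl

/-- The automorphism group of a graph. -/
instance (X : SGraph) : Group (Aut X) where
  mul f g := ⟨Hom.comp f.toHom g.toHom, Hom.comp g.invHom f.invHom,
    by
      show Hom.comp (Hom.comp g.invHom f.invHom) (Hom.comp f.toHom g.toHom) = Hom.idHom X
      calc Hom.comp (Hom.comp g.invHom f.invHom) (Hom.comp f.toHom g.toHom)
          = Hom.comp g.invHom (Hom.comp (Hom.comp f.invHom f.toHom) g.toHom) := rfl
        _ = Hom.comp g.invHom (Hom.comp (Hom.idHom X) g.toHom) := by rw [f.left_inv]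
        _ = Hom.comp g.invHom g.toHom := rfl
        _ = Hom.idHom X := g.left_inv,
    by
      show Hom.comp (Hom.comp f.toHom g.toHom) (Hom.comp g.invHom f.invHom) = Hom.idHom X
      calc Hom.comp (Hom.comp f.toHom g.toHom) (Hom.comp g.invHom f.invHom)
          = Hom.comp f.toHom (Hom.comp (Hom.comp g.toHom g.invHom) f.invHom) := rfl
        _ = Hom.comp f.toHom (Hom.comp (Hom.idHom X) f.invHom) := by rw [g.right_inv]
        _ = Hom.comp f.toHom f.invHom := rfl
        _ = Hom.idHom X := f.right_inv⟩
  one := ⟨Hom.idHom X, Hom.idHom X, rfl, rfl⟩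
  inv f := ⟨f.invHom, f.toHom, f.right_inv, f.left_inv⟩
  mul_assoc f g h := Aut.ext' rfl
  one_mul f := Aut.ext' rfl
  mul_one f := Aut.ext' rfl
  inv_mul_cancel f := Aut.ext' f.left_inv

variable (X : SGraph)

/-- Paths in `X` starting at the basepoint `x₀`. -/
def PathFrom (x₀ : X.V) : Type := {γ : List X.E // ∃ y, X.IsPath x₀ y γ}

/-- Two paths from the basepoint are related if they are homologous. -/
def AtomRel (x₀ : X.V) (a b : X.PathFrom x₀) : Prop := ∃ y, X.Homologous x₀ y a.1 b.1

/-- The atoms: homology classes of paths starting at the basepoint.  These are the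
vertices of the maximal abelian cover. -/
def Atom (x₀ : X.V) : Type := Quot (X.AtomRel x₀)

/-- Data for an edge of the maximal abelian cover: a path `α` from the basepoint
together with an edge `e` with `s(e)` the endpoint of `α`. -/
def BarBase (x₀ : X.V) : Type := {q : List X.E × X.E // X.IsPath x₀ (X.s q.2) q.1}

def BarRel (x₀ : X.V) (q q' : X.BarBase x₀) : Prop :=
  q.1.2 = q'.1.2 ∧ X.Homologous x₀ (X.s q.1.2) q.1.1 q'.1.1

/-- The edges of the maximal abelian cover. -/
def BarEdge (x₀ : X.V) : Type := Quot (X.BarRel x₀)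

def barS (x₀ : X.V) : X.BarEdge x₀ → X.Atom x₀ :=
  Quot.lift (fun q => Quot.mk _ ⟨q.1.1, ⟨X.s q.1.2, q.2⟩⟩)
    (fun q q' h => Quot.sound ⟨X.s q.1.2, h.2⟩)

def barT (x₀ : X.V) : X.BarEdge x₀ → X.Atom x₀ :=
  Quot.lift
    (fun q => Quot.mk _ ⟨q.1.1 ++ [q.1.2], ⟨X.t q.1.2, q.2.append (X.isPath_single q.1.2)⟩⟩)
    (fun q q' h => by
      apply Quot.sound
      refine ⟨X.t q.1.2, ?_⟩
      show X.Homologous x₀ (X.t q.1.2) (q.1.1 ++ [q.1.2]) (q'.1.1 ++ [q'.1.2])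
      rw [← h.1]
      exact Homologous.append_right h.2 (X.isPath_single q.1.2))

def barInv (x₀ : X.V) : X.BarEdge x₀ → X.BarEdge x₀ :=
  Quot.lift
    (fun q => Quot.mk _ ⟨(q.1.1 ++ [q.1.2], X.inv q.1.2), by
      rw [X.s_inv]; exact q.2.append (X.isPath_single q.1.2)⟩)
    (fun q q' h => by
      apply Quot.sound
      constructor
      · show X.inv q.1.2 = X.inv q'.1.2
        rw [h.1]
      · show X.Homologous x₀ (X.s (X.inv q.1.2)) (q.1.1 ++ [q.1.2]) (q'.1.1 ++ [q'.1.2])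
        rw [X.s_inv, ← h.1]
        exact Homologous.append_right h.2 (X.isPath_single q.1.2))

def eproj (x₀ : X.V) : X.BarEdge x₀ → X.E := Quot.lift (fun q => q.1.2) (fun _ _ h => h.1)

def atomEnd (x₀ : X.V) : X.Atom x₀ → X.V :=
  Quot.lift (fun γ => X.endFrom x₀ γ.1)
    (fun a b h => by
      show X.endFrom x₀ a.1 = X.endFrom x₀ b.1
      obtain ⟨y, hy⟩ := h
      obtain ⟨ha, hb⟩ := hy.isPath
      rw [ha.endFrom_eq, hb.endFrom_eq])

private theorem isPath_pair (e : X.E) : X.IsPath (X.s e) (X.s e) [e, X.inv e] := by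
  have tail : X.IsPath (X.t (X.inv e)) (X.s e) [] := by rw [X.t_inv]; exact .nil _
  have mid : X.IsPath (X.t e) (X.s e) [X.inv e] := by
    have := IsPath.cons (X.inv e) tail
    rwa [X.s_inv] at this
  exact .cons e mid

private theorem hom_cancel_pair (x₀ : X.V) (q : X.BarBase x₀) :
    X.Homologous x₀ (X.s q.1.2) ((q.1.1 ++ [q.1.2]) ++ [X.inv q.1.2]) q.1.1 := by
  have p1 : X.IsPath x₀ (X.s q.1.2) (q.1.1 ++ q.1.2 :: X.inv q.1.2 :: []) :=
    q.2.append (X.isPath_pair q.1.2)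
  have p2 : X.IsPath x₀ (X.s q.1.2) (q.1.1 ++ []) := by simpa using q.2
  have := Homologous.cancel q.1.1 [] q.1.2 p1 p2
  simpa using this

/-- The maximal abelian cover of `X` relative to the basepoint `x₀`. -/
def Bar (x₀ : X.V) : SGraph where
  V := X.Atom x₀
  E := X.BarEdge x₀
  s := X.barS x₀
  t := X.barT x₀
  inv := X.barInv x₀
  s_inv := fun e =>
    @Quot.ind _ _ (fun e => X.barS x₀ (X.barInv x₀ e) = X.barT x₀ e)
      (fun q => rfl) e
  t_inv := fun e =>
    @Quot.ind _ _ (fun e => X.barT x₀ (X.barInv x₀ e) = X.barS x₀ e)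
      (fun q => Quot.sound ⟨X.s q.1.2, by
        show X.Homologous x₀ (X.s q.1.2) ((q.1.1 ++ [q.1.2]) ++ [X.inv q.1.2]) q.1.1
        exact X.hom_cancel_pair x₀ q⟩) e
  inv_inv := fun e =>
    @Quot.ind _ _ (fun e => X.barInv x₀ (X.barInv x₀ e) = e)
      (fun q => Quot.sound ⟨by show X.inv (X.inv q.1.2) = q.1.2; rw [X.inv_inv], by
        show X.Homologous x₀ (X.s (X.inv (X.inv q.1.2)))
          ((q.1.1 ++ [q.1.2]) ++ [X.inv q.1.2]) q.1.1
        rw [X.inv_inv]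
        exact X.hom_cancel_pair x₀ q⟩) e
  inv_ne := fun e =>
    @Quot.ind _ _ (fun e => X.barInv x₀ e ≠ e)
      (fun q h => X.inv_ne q.1.2 (congrArg (X.eproj x₀) h)) e

/-- The covering map from the maximal abelian cover to `X`. -/
def proj (x₀ : X.V) : Hom (X.Bar x₀) X where
  vMap := X.atomEnd x₀
  eMap := X.eproj x₀
  map_s := fun e =>
    @Quot.ind _ _ (fun e => X.s (X.eproj x₀ e) = X.atomEnd x₀ (X.barS x₀ e))
      (fun q => (q.2.endFrom_eq).symm) e
  map_t := fun e =>
    @Quot.ind _ _ (fun e => X.t (X.eproj x₀ e) = X.atomEnd x₀ (X.barT x₀ e))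
      (fun q => ((q.2.append (X.isPath_single q.1.2)).endFrom_eq).symm) e
  map_inv := fun e =>
    @Quot.ind _ _ (fun e => X.inv (X.eproj x₀ e) = X.eproj x₀ (X.barInv x₀ e))
      (fun q => rfl) e

/-- `g` covers `f` when `q ∘ g = f ∘ q`. -/
def Covers (x₀ : X.V) (g : Aut (X.Bar x₀)) (f : Aut X) : Prop :=
  Hom.comp (X.proj x₀) g.toHom = Hom.comp f.toHom (X.proj x₀)

/-- The group of covering symmetries: automorphisms of the maximal abelian cover
that cover some automorphism of `X`. -/
def Cov (x₀ : X.V) : Subgroup (Aut (X.Bar x₀)) where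
  carrier := {g | ∃ f : Aut X, X.Covers x₀ g f}
  one_mem' := ⟨1, rfl⟩
  mul_mem' := by
    rintro a b ⟨f, hf⟩ ⟨f', hf'⟩
    refine ⟨f * f', ?_⟩
    show Hom.comp (X.proj x₀) (Hom.comp a.toHom b.toHom)
        = Hom.comp (Hom.comp f.toHom f'.toHom) (X.proj x₀)
    calc Hom.comp (X.proj x₀) (Hom.comp a.toHom b.toHom)
        = Hom.comp (Hom.comp (X.proj x₀) a.toHom) b.toHom := rfl
      _ = Hom.comp (Hom.comp f.toHom (X.proj x₀)) b.toHom := by rw [hf]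
      _ = Hom.comp f.toHom (Hom.comp (X.proj x₀) b.toHom) := rfl
      _ = Hom.comp f.toHom (Hom.comp f'.toHom (X.proj x₀)) := by rw [hf']
      _ = Hom.comp (Hom.comp f.toHom f'.toHom) (X.proj x₀) := rfl
  inv_mem' := by
    rintro a ⟨f, hf⟩
    refine ⟨f⁻¹, ?_⟩
    show Hom.comp (X.proj x₀) a.invHom = Hom.comp f.invHom (X.proj x₀)
    have key : Hom.comp (Hom.comp f.invHom (X.proj x₀)) a.toHom = X.proj x₀ := by
      calc Hom.comp (Hom.comp f.invHom (X.proj x₀)) a.toHom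
          = Hom.comp f.invHom (Hom.comp (X.proj x₀) a.toHom) := rfl
        _ = Hom.comp f.invHom (Hom.comp f.toHom (X.proj x₀)) := by rw [hf]
        _ = Hom.comp (Hom.comp f.invHom f.toHom) (X.proj x₀) := rfl
        _ = Hom.comp (Hom.idHom X) (X.proj x₀) := by rw [f.left_inv]
        _ = X.proj x₀ := rfl
    calc Hom.comp (X.proj x₀) a.invHom
        = Hom.comp (Hom.comp (Hom.comp f.invHom (X.proj x₀)) a.toHom) a.invHom := by rw [key]
      _ = Hom.comp (Hom.comp f.invHom (X.proj x₀)) (Hom.comp a.toHom a.invHom) := rfl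
      _ = Hom.comp (Hom.comp f.invHom (X.proj x₀)) (Hom.idHom _) := by rw [a.right_inv]
      _ = Hom.comp f.invHom (X.proj x₀) := rfl

end SGraph
namespace SGraph

variable (X : SGraph)

/-- Loops based at `x₀`. -/
def LoopAt (x₀ : X.V) : Type := {γ : List X.E // X.IsPath x₀ x₀ γ}

def H1Rel (x₀ : X.V) (a b : X.LoopAt x₀) : Prop := X.Homologous x₀ x₀ a.1 b.1

/-- The group of homology classes of loops based at `x₀`, with composition as
the group operation: this is `H₁(X,ℤ)`. -/
def H1 (x₀ : X.V) : Type := Quot (X.H1Rel x₀)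

def h1one (x₀ : X.V) : X.H1 x₀ := Quot.mk _ ⟨[], .nil x₀⟩

def h1mul (x₀ : X.V) : X.H1 x₀ → X.H1 x₀ → X.H1 x₀ :=
  Quot.lift
    (fun a => Quot.lift
      (fun b => Quot.mk (X.H1Rel x₀) ⟨a.1 ++ b.1, a.2.append b.2⟩)
      (fun b b' hb => Quot.sound (Homologous.prepend_left a.2 hb)))
    (fun a a' ha => by
      funext b
      refine @Quot.ind _ _
        (fun b => Quot.lift _ _ b = Quot.lift _ _ b) (fun b => ?_) b
      exact Quot.sound (ha.append_right b.2))

def h1inv (x₀ : X.V) : X.H1 x₀ → X.H1 x₀ :=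
  Quot.lift (fun a => Quot.mk (X.H1Rel x₀) ⟨X.revP a.1, a.2.revP⟩)
    (fun a a' h => Quot.sound h.revP)

theorem h1mul_assoc (x₀ : X.V) (a b c : X.H1 x₀) :
    X.h1mul x₀ (X.h1mul x₀ a b) c = X.h1mul x₀ a (X.h1mul x₀ b c) := by
  refine @Quot.ind _ _
    (fun a => ∀ b c, X.h1mul x₀ (X.h1mul x₀ a b) c = X.h1mul x₀ a (X.h1mul x₀ b c))
    (fun a => ?_) a b c
  intro b c
  refine @Quot.ind _ _
    (fun b => ∀ c, X.h1mul x₀ (X.h1mul x₀ (Quot.mk _ a) b) c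
      = X.h1mul x₀ (Quot.mk _ a) (X.h1mul x₀ b c)) (fun b => ?_) b c
  intro c
  refine @Quot.ind _ _
    (fun c => X.h1mul x₀ (X.h1mul x₀ (Quot.mk _ a) (Quot.mk _ b)) c
      = X.h1mul x₀ (Quot.mk _ a) (X.h1mul x₀ (Quot.mk _ b) c)) (fun c => ?_) c
  exact congrArg (Quot.mk _) (Subtype.ext (List.append_assoc a.1 b.1 c.1))

theorem h1_one_mul (x₀ : X.V) (a : X.H1 x₀) : X.h1mul x₀ (X.h1one x₀) a = a := by
  refine @Quot.ind _ _ (fun a => X.h1mul x₀ (X.h1one x₀) a = a) (fun a => ?_) a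
  rfl

theorem h1_mul_one (x₀ : X.V) (a : X.H1 x₀) : X.h1mul x₀ a (X.h1one x₀) = a := by
  refine @Quot.ind _ _ (fun a => X.h1mul x₀ a (X.h1one x₀) = a) (fun a => ?_) a
  exact congrArg (Quot.mk _) (Subtype.ext (List.append_nil a.1))

theorem h1_inv_mul (x₀ : X.V) (a : X.H1 x₀) :
    X.h1mul x₀ (X.h1inv x₀ a) a = X.h1one x₀ := by
  refine @Quot.ind _ _ (fun a => X.h1mul x₀ (X.h1inv x₀ a) a = X.h1one x₀)
    (fun a => ?_) a
  exact Quot.sound (homologous_revP_append a.2)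

instance instGroupH1 (x₀ : X.V) : Group (X.H1 x₀) where
  one := X.h1one x₀
  mul := X.h1mul x₀
  inv := X.h1inv x₀
  mul_assoc := X.h1mul_assoc x₀
  one_mul := X.h1_one_mul x₀
  mul_one := X.h1_mul_one x₀
  inv_mul_cancel := X.h1_inv_mul x₀

theorem boundary_add (c d : ↥X.C1) : X.boundary (c + d) = X.boundary c + X.boundary d := by
  show Finsupp.sum ((c : X.E →₀ ℝ) + (d : X.E →₀ ℝ)) _ = _
  exact Finsupp.sum_add_index' (fun e => zero_smul ℝ _) (fun e x y => add_smul x y _)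

theorem boundary_smul (r : ℝ) (c : ↥X.C1) : X.boundary (r • c) = r • X.boundary c := by
  unfold boundary
  have hc : ((r • c : ↥X.C1) : X.E →₀ ℝ) = r • (c : X.E →₀ ℝ) := rfl
  rw [hc, Finsupp.sum_smul_index, Finsupp.smul_sum]
  · exact Finsupp.sum_congr fun e _ => by rw [mul_smul]
  · intro e
    exact zero_smul ℝ _

theorem boundary_zero : X.boundary 0 = 0 := by
  show Finsupp.sum (0 : X.E →₀ ℝ) _ = 0
  exact Finsupp.sum_zero_index

/-- The space `Z₁(X,ℝ)` of 1-cycles, as a subspace of `C₁(X,ℝ)`. -/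
noncomputable def Z1 : Submodule ℝ ↥X.C1 where
  carrier := {c | X.IsCycle c}
  add_mem' := fun {a b} ha hb => by
    show X.IsCycle (a + b)
    unfold IsCycle at *
    rw [X.boundary_add, ha, hb, add_zero]
  zero_mem' := X.boundary_zero
  smul_mem' := fun r c hc => by
    show X.IsCycle (r • c)
    unfold IsCycle at *
    rw [X.boundary_smul, hc, smul_zero]

/-- A map of the space of 1-cycles is affine if it is a linear map followed by
a translation. -/
def IsAffine (T : ↥X.Z1 → ↥X.Z1) : Prop :=
  ∃ (L : ↥X.Z1 →ₗ[ℝ] ↥X.Z1) (v : ↥X.Z1), ∀ c, T c = v + L c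

/-- The permutation of edges induced by an automorphism. -/
def eEquiv (f : X.Aut) : X.E ≃ X.E where
  toFun := f.toHom.eMap
  invFun := f.invHom.eMap
  left_inv := fun e => congrFun (congrArg Hom.eMap f.left_inv) e
  right_inv := fun e => congrFun (congrArg Hom.eMap f.right_inv) e

/-- The linear action `f_*` of an automorphism `f` on 1-chains, with
`f_*(e) = f(e)` for every edge. -/
noncomputable def pushChain (f : X.Aut) (c : ↥X.C1) : ↥X.C1 :=
  ⟨Finsupp.equivMapDomain (X.eEquiv f) (c : X.E →₀ ℝ), by
    intro e
    rw [Finsupp.equivMapDomain_apply, Finsupp.equivMapDomain_apply]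
    have h1 : (X.eEquiv f).symm (X.inv e) = X.inv ((X.eEquiv f).symm e) := by
      show f.invHom.eMap (X.inv e) = X.inv (f.invHom.eMap e)
      exact (f.invHom.map_inv e).symm
    rw [h1]
    exact c.2 _⟩

/-- The image of the atom `⟦δ⟧` under the covering symmetry determined by the
pair `(f, ⟦β⟧)`: the atom `⟦β f(δ)⟧`. -/
def mapPathFrom (x₀ : X.V) (f : X.Aut) (β : List X.E)
    (hβ : X.IsPath x₀ (f.toHom.vMap x₀) β) (δ : X.PathFrom x₀) : X.PathFrom x₀ :=
  ⟨β ++ δ.1.map f.toHom.eMap, by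
    obtain ⟨y, hy⟩ := δ.2
    exact ⟨f.toHom.vMap y, hβ.append (hy.map f.toHom)⟩⟩

/-- The image of the edge `(⟦α⟧, e)` under the covering symmetry determined by the
pair `(f, ⟦β⟧)`: the edge `(⟦β f(α)⟧, f(e))`. -/
def mapBarBase (x₀ : X.V) (f : X.Aut) (β : List X.E)
    (hβ : X.IsPath x₀ (f.toHom.vMap x₀) β) (q : X.BarBase x₀) : X.BarBase x₀ :=
  ⟨(β ++ q.1.1.map f.toHom.eMap, f.toHom.eMap q.1.2), by
    show X.IsPath x₀ (X.s (f.toHom.eMap q.1.2)) _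
    rw [f.toHom.map_s]
    exact hβ.append (q.2.map f.toHom)⟩

/-- The automorphism `g` of the maximal abelian cover acts as the pair `(f, ⟦β⟧)`:
it maps each atom `⟦α⟧` to `⟦β f(α)⟧` and each edge `(⟦α⟧, e)` to `(⟦β f(α)⟧, f(e))`. -/
def ActsAs (x₀ : X.V) (g : Aut (X.Bar x₀)) (f : X.Aut) (β : List X.E) : Prop :=
  ∃ hβ : X.IsPath x₀ (f.toHom.vMap x₀) β,
    (∀ δ : X.PathFrom x₀,
      g.toHom.vMap (Quot.mk _ δ) = Quot.mk _ (X.mapPathFrom x₀ f β hβ δ)) ∧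
    (∀ q : X.BarBase x₀,
      g.toHom.eMap (Quot.mk _ q) = Quot.mk _ (X.mapBarBase x₀ f β hβ q))

/-- The automorphism `g` of the maximal abelian cover is the deck transformation
determined by the loop `γ` based at `x₀`: it maps each atom `⟦δ⟧` to `⟦γδ⟧`. -/
def IsDeck (x₀ : X.V) (g : Aut (X.Bar x₀)) (γ : X.LoopAt x₀) : Prop :=
  ∀ δ : X.PathFrom x₀, g.toHom.vMap (Quot.mk _ δ) =
    Quot.mk _ (⟨γ.1 ++ δ.1, by
      obtain ⟨y, hy⟩ := δ.2
      exact ⟨y, γ.2.append hy⟩⟩ : X.PathFrom x₀)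

/-- `ρ` is an action of the group of covering symmetries by affine transformations
of `Z₁(X,ℝ)` for which the embedding of the atoms is equivariant:
`ρ(g)(i(⟦α⟧)) = i(g(⟦α⟧))`. -/
def GoodAction (x₀ : X.V) (π : ↥X.C1 → ↥X.C1)
    (ρ : ↥(X.Cov x₀) → (↥X.Z1 → ↥X.Z1)) : Prop :=
  ρ 1 = id ∧ (∀ g h, ρ (g * h) = ρ g ∘ ρ h) ∧ (∀ g, X.IsAffine (ρ g)) ∧
  ∀ (g : ↥(X.Cov x₀)) (α δ : X.PathFrom x₀),
    g.1.toHom.vMap (Quot.mk _ α) = Quot.mk _ δ →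
    ∀ z w : ↥X.Z1, (z : ↥X.C1) = π (X.pathChain α.1) →
      (w : ↥X.C1) = π (X.pathChain δ.1) → ρ g z = w

end SGraph


/-!
The pair `(f, ⟦β⟧)` acts on the maximal abelian cover by `⟦α⟧ ↦ ⟦β f(α)⟧`; this is well defined
because maps of graphs preserve homology, and it composes like a semidirect product:
`(f, β) ∘ (f', β') = (f f', β f(β'))`. Hence `(f⁻¹, f⁻¹(β⁻¹))` is an inverse and every pair gives an
element of `Cov(X)`. The rest is unique path lifting: a self-map of the cover is determined by its
projection to `X` and by the image of the trivial atom, because every atom is reached by lifting a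
path from it and an edge of the cover is determined by its source and its projection. So an
element of `Cov(X)` covering `f` and sending the trivial atom to `⟦β⟧` is the one given by
`(f, ⟦β⟧)`, and the pair is recovered from it: `f` from the projection (which is onto since `X` is
connected) and `⟦β⟧` as the image of the trivial atom.
-/

namespace SGraph

theorem Hom.ext {X Y : SGraph} {φ ψ : Hom X Y} (hv : φ.vMap = ψ.vMap) (he : φ.eMap = ψ.eMap) :
    φ = ψ := by
  cases φ
  cases ψ
  cases hv
  cases he
  rfl

@[simp]
theorem Aut.invHom_vMap_toHom_vMap {X : SGraph} (f : X.Aut) (x : X.V) :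
    f.invHom.vMap (f.toHom.vMap x) = x :=
  congrFun (congrArg Hom.vMap f.left_inv) x

@[simp]
theorem Aut.inv_toHom {X : SGraph} (f : X.Aut) : (f⁻¹).toHom = f.invHom :=
  rfl

@[simp]
theorem Aut.toHom_eMap_invHom_eMap {X : SGraph} (f : X.Aut) (e : X.E) :
    f.toHom.eMap (f.invHom.eMap e) = e :=
  congrFun (congrArg Hom.eMap f.right_inv) e

variable {X : SGraph}

theorem IsPath.target_eq {x y y' : X.V} {γ : List X.E} (h : X.IsPath x y γ)
    (h' : X.IsPath x y' γ) : y = y' := by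
  rw [← h.endFrom_eq, ← h'.endFrom_eq]

theorem IsPath.of_append {x z : X.V} {γ δ : List X.E} (h : X.IsPath x z (γ ++ δ)) :
    ∃ y, X.IsPath x y γ ∧ X.IsPath y z δ := by
  induction γ generalizing x with
  | nil => exact ⟨x, .nil x, h⟩
  | cons e γ ih =>
    cases h with
    | cons _ h =>
      obtain ⟨y, hγ, hδ⟩ := ih h
      exact ⟨y, .cons e hγ, hδ⟩

theorem revP_revP (γ : List X.E) : X.revP (X.revP γ) = γ := by
  simp [revP, Function.comp_def, X.inv_inv]

theorem Homologous.map {Y : SGraph} {x y : X.V} {a b : List X.E} (h : X.Homologous x y a b)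
    (φ : Hom X Y) : Y.Homologous (φ.vMap x) (φ.vMap y) (a.map φ.eMap) (b.map φ.eMap) := by
  induction h with
  | refl γ hγ => exact .refl _ (hγ.map φ)
  | cancel γ δ e h h' =>
    have p := h.map φ
    have p' := h'.map φ
    simp only [List.map_append, List.map_cons, ← φ.map_inv] at p p' ⊢
    exact .cancel _ _ _ p p'
  | swap γ σ τ δ v hσ hτ h h' =>
    have p := h.map φ
    have p' := h'.map φ
    simp only [List.map_append] at p p' ⊢
    exact .swap _ _ _ _ _ (hσ.map φ) (hτ.map φ) p p'
  | symm _ ih => exact ih.symm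
  | trans _ _ ih₁ ih₂ => exact ih₁.trans ih₂

theorem homologous_append_revP {x y : X.V} {γ : List X.E} (h : X.IsPath x y γ) :
    X.Homologous x x (γ ++ X.revP γ) [] := by
  simpa only [revP_revP] using homologous_revP_append h.revP

section Cover

variable {x₀ : X.V}

theorem atomRel_equivalence : Equivalence (X.AtomRel x₀) where
  refl a := let ⟨y, hy⟩ := a.2; ⟨y, .refl _ hy⟩
  symm := fun ⟨y, h⟩ => ⟨y, h.symm⟩
  trans := fun ⟨y, h⟩ ⟨_, h'⟩ => by
    obtain rfl := h.isPath.2.target_eq h'.isPath.1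
    exact ⟨y, h.trans h'⟩

theorem homologous_of_atom_eq {y y' : X.V} {β β' : List X.E} (hβ : X.IsPath x₀ y β)
    (hβ' : X.IsPath x₀ y' β')
    (h : (Quot.mk _ ⟨β, y, hβ⟩ : X.Atom x₀) = Quot.mk _ ⟨β', y', hβ'⟩) :
    X.Homologous x₀ y β β' := by
  obtain ⟨z, hz⟩ := atomRel_equivalence.eqvGen_iff.1 (Quot.eqvGen_exact h)
  obtain rfl := hz.isPath.1.target_eq hβ
  exact hz

def baseAtom (X : SGraph) (x₀ : X.V) : X.Atom x₀ := Quot.mk _ ⟨[], x₀, .nil x₀⟩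

theorem barEdge_ext {ε ε' : X.BarEdge x₀} (hs : X.barS x₀ ε = X.barS x₀ ε')
    (hp : X.eproj x₀ ε = X.eproj x₀ ε') : ε = ε' := by
  induction ε using Quot.ind with | _ q =>
  induction ε' using Quot.ind with | _ q' =>
  exact Quot.sound ⟨hp, homologous_of_atom_eq q.2 q'.2 hs⟩

theorem barHom_ext {φ ψ : Hom (X.Bar x₀) (X.Bar x₀)}
    (hp : Hom.comp (X.proj x₀) φ = Hom.comp (X.proj x₀) ψ)
    (hb : φ.vMap (X.baseAtom x₀) = ψ.vMap (X.baseAtom x₀)) : φ = ψ := by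
  have hE : ∀ ε, φ.vMap (X.barS x₀ ε) = ψ.vMap (X.barS x₀ ε) → φ.eMap ε = ψ.eMap ε :=
    fun ε hs => barEdge_ext ((φ.map_s ε).trans (hs.trans (ψ.map_s ε).symm))
      (congrFun (congrArg Hom.eMap hp) ε)
  have hV : ∀ δ : X.PathFrom x₀, φ.vMap (Quot.mk _ δ) = ψ.vMap (Quot.mk _ δ) := by
    rintro ⟨l, hl⟩
    induction l using List.reverseRecOn with
    | nil => exact hb
    | append_singleton l e ih =>
      obtain ⟨y, hy⟩ := hl
      obtain ⟨_, hl', he⟩ := hy.of_append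
      cases he with
      | cons _ _ =>
        let ε : (X.Bar x₀).E := Quot.mk _ ⟨(l, e), hl'⟩
        show φ.vMap ((X.Bar x₀).t ε) = ψ.vMap ((X.Bar x₀).t ε)
        rw [← φ.map_t ε, ← ψ.map_t ε, hE ε (ih ⟨_, hl'⟩)]
  exact Hom.ext (funext (Quot.ind hV)) (funext (Quot.ind fun _ => hE _ (hV _)))

theorem Connected.hom_eq_of_comp_proj_eq (hconn : X.Connected) {Y : SGraph} {φ ψ : Hom X Y}
    (h : Hom.comp φ (X.proj x₀) = Hom.comp ψ (X.proj x₀)) : φ = ψ := by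
  refine Hom.ext (funext fun x => ?_) (funext fun e => ?_)
  · obtain ⟨l, hl⟩ := hconn x₀ x
    have : φ.vMap (X.endFrom x₀ l) = ψ.vMap (X.endFrom x₀ l) :=
      congrFun (congrArg Hom.vMap h) (Quot.mk _ ⟨l, x, hl⟩)
    rwa [hl.endFrom_eq] at this
  · obtain ⟨l, hl⟩ := hconn x₀ (X.s e)
    exact congrFun (congrArg Hom.eMap h) (Quot.mk _ ⟨(l, e), hl⟩)

theorem Connected.covers_unique (hconn : X.Connected) {g : Aut (X.Bar x₀)} {f f' : X.Aut}
    (hf : X.Covers x₀ g f) (hf' : X.Covers x₀ g f') : f = f' :=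
  Aut.ext' (hconn.hom_eq_of_comp_proj_eq (hf.symm.trans hf'))

end Cover

section PairAction

variable {x₀ : X.V}

def barMapHom (f : X.Aut) (β : List X.E) (hβ : X.IsPath x₀ (f.toHom.vMap x₀) β) :
    Hom (X.Bar x₀) (X.Bar x₀) where
  vMap := Quot.lift (fun δ => Quot.mk _ (X.mapPathFrom x₀ f β hβ δ)) fun _ _ ⟨y, h⟩ =>
    Quot.sound ⟨f.toHom.vMap y, (h.map f.toHom).prepend_left hβ⟩
  eMap := Quot.lift (fun q => Quot.mk _ (X.mapBarBase x₀ f β hβ q)) fun q _ ⟨he, h⟩ =>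
    Quot.sound ⟨congrArg f.toHom.eMap he, by
      show X.Homologous x₀ (X.s (f.toHom.eMap q.1.2)) _ _
      rw [f.toHom.map_s]
      exact (h.map f.toHom).prepend_left hβ⟩
  map_s := Quot.ind fun _ => rfl
  map_t := Quot.ind fun _ =>
    congrArg (Quot.mk _) (Subtype.ext (by simp [mapBarBase, mapPathFrom]))
  map_inv := Quot.ind fun q =>
    congrArg (Quot.mk _) (Subtype.ext (by simp [mapBarBase, f.toHom.map_inv q.1.2]))

variable {f : X.Aut} {β : List X.E}

theorem barMapHom_baseAtom (hβ : X.IsPath x₀ (f.toHom.vMap x₀) β) :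
    (barMapHom f β hβ).vMap (X.baseAtom x₀) = Quot.mk _ ⟨β, _, hβ⟩ :=
  congrArg (Quot.mk _) (Subtype.ext (List.append_nil β))

theorem proj_comp_barMapHom (hβ : X.IsPath x₀ (f.toHom.vMap x₀) β) :
    Hom.comp (X.proj x₀) (barMapHom f β hβ) = Hom.comp f.toHom (X.proj x₀) := by
  refine Hom.ext (funext (Quot.ind fun ⟨δ, y, hδ⟩ => ?_)) (funext (Quot.ind fun _ => rfl))
  show X.endFrom x₀ (β ++ δ.map f.toHom.eMap) = f.toHom.vMap (X.endFrom x₀ δ)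
  rw [hδ.endFrom_eq, (hβ.append (hδ.map f.toHom)).endFrom_eq]

theorem covers_of_toHom_eq_barMapHom {g : Aut (X.Bar x₀)}
    {hβ : X.IsPath x₀ (f.toHom.vMap x₀) β} (hg : g.toHom = barMapHom f β hβ) :
    X.Covers x₀ g f := by
  rw [Covers, hg]
  exact proj_comp_barMapHom hβ

theorem barMapHom_congr {β' : List X.E} (hβ : X.IsPath x₀ (f.toHom.vMap x₀) β)
    (hβ' : X.IsPath x₀ (f.toHom.vMap x₀) β') (h : X.Homologous x₀ (f.toHom.vMap x₀) β β') :
    barMapHom f β hβ = barMapHom f β' hβ' := by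
  refine barHom_ext ((proj_comp_barMapHom hβ).trans (proj_comp_barMapHom hβ').symm) ?_
  rw [barMapHom_baseAtom, barMapHom_baseAtom]
  exact Quot.sound ⟨_, h⟩

theorem barMapHom_comp {f' : X.Aut} {β' : List X.E} (hβ : X.IsPath x₀ (f.toHom.vMap x₀) β)
    (hβ' : X.IsPath x₀ (f'.toHom.vMap x₀) β') :
    Hom.comp (barMapHom f β hβ) (barMapHom f' β' hβ') =
      barMapHom (f * f') (β ++ β'.map f.toHom.eMap) (hβ.append (hβ'.map f.toHom)) := by
  refine barHom_ext ?_ ?_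
  · calc Hom.comp (X.proj x₀) (Hom.comp (barMapHom f β hβ) (barMapHom f' β' hβ'))
        = Hom.comp (Hom.comp (X.proj x₀) (barMapHom f β hβ)) (barMapHom f' β' hβ') := rfl
      _ = Hom.comp f.toHom (Hom.comp (X.proj x₀) (barMapHom f' β' hβ')) := by
        rw [proj_comp_barMapHom]; rfl
      _ = Hom.comp (X.proj x₀) (barMapHom (f * f') _ _) := by
        rw [proj_comp_barMapHom, proj_comp_barMapHom]; rfl
  · show (barMapHom f β hβ).vMap ((barMapHom f' β' hβ').vMap (X.baseAtom x₀)) = _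
    rw [barMapHom_baseAtom, barMapHom_baseAtom]
    rfl

theorem barMapHom_eq_idHom (hf : f = 1) (hβ : X.IsPath x₀ (f.toHom.vMap x₀) β)
    (h : X.Homologous x₀ x₀ β []) : barMapHom f β hβ = Hom.idHom (X.Bar x₀) := by
  subst hf
  refine barHom_ext (proj_comp_barMapHom hβ) ?_
  rw [barMapHom_baseAtom]
  exact Quot.sound ⟨x₀, h⟩

theorem IsPath.map_invHom_revP (hβ : X.IsPath x₀ (f.toHom.vMap x₀) β) :
    X.IsPath x₀ ((f⁻¹).toHom.vMap x₀) ((X.revP β).map f.invHom.eMap) := by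
  simpa using hβ.revP.map f.invHom

variable (f β) in
def barAut (hβ : X.IsPath x₀ (f.toHom.vMap x₀) β) :
    Aut (X.Bar x₀) where
  toHom := barMapHom f β hβ
  invHom := barMapHom f⁻¹ _ hβ.map_invHom_revP
  left_inv := by
    rw [barMapHom_comp]
    refine barMapHom_eq_idHom (inv_mul_cancel f) _ ?_
    simpa using (homologous_revP_append hβ).map f.invHom
  right_inv := by
    rw [barMapHom_comp]
    refine barMapHom_eq_idHom (mul_inv_cancel f) _ ?_
    simpa [Function.comp_def] using homologous_append_revP hβ

theorem actsAs_iff {g : Aut (X.Bar x₀)} :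
    X.ActsAs x₀ g f β ↔ ∃ hβ, g.toHom = barMapHom f β hβ := by
  constructor
  · rintro ⟨hβ, hv, he⟩
    exact ⟨hβ, Hom.ext (funext (Quot.ind hv)) (funext (Quot.ind he))⟩
  · rintro ⟨hβ, hg⟩
    exact ⟨hβ, fun _ => by rw [hg]; rfl, fun _ => by rw [hg]; rfl⟩

theorem Covers.exists_isPath_baseAtom {g : Aut (X.Bar x₀)} (hg : X.Covers x₀ g f) :
    ∃ (β : List X.E) (hβ : X.IsPath x₀ (f.toHom.vMap x₀) β),
      g.toHom.vMap (X.baseAtom x₀) = Quot.mk _ ⟨β, _, hβ⟩ := by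
  obtain ⟨⟨β, y, hβ⟩, hrep⟩ := Quot.exists_rep (g.toHom.vMap (X.baseAtom x₀))
  have hy : X.atomEnd x₀ (g.toHom.vMap (X.baseAtom x₀)) = f.toHom.vMap x₀ :=
    congrFun (congrArg Hom.vMap hg) (X.baseAtom x₀)
  rw [← hrep] at hy
  change X.endFrom x₀ β = _ at hy
  rw [hβ.endFrom_eq] at hy
  subst hy
  exact ⟨β, hβ, hrep.symm⟩

theorem exists_mem_cov_actsAs (hβ : X.IsPath x₀ (f.toHom.vMap x₀) β) :
    ∃ g : Aut (X.Bar x₀), g ∈ X.Cov x₀ ∧ X.ActsAs x₀ g f β :=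
  ⟨barAut f β hβ, ⟨f, covers_of_toHom_eq_barMapHom rfl⟩, actsAs_iff.2 ⟨hβ, rfl⟩⟩

theorem ActsAs.eq_of_homologous {β' : List X.E} {g g' : Aut (X.Bar x₀)}
    (hg : X.ActsAs x₀ g f β) (hg' : X.ActsAs x₀ g' f β')
    (h : X.Homologous x₀ (f.toHom.vMap x₀) β β') : g = g' := by
  obtain ⟨hβ, hg⟩ := actsAs_iff.1 hg
  obtain ⟨hβ', hg'⟩ := actsAs_iff.1 hg'
  exact Aut.ext' (hg.trans ((barMapHom_congr hβ hβ' h).trans hg'.symm))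

theorem ActsAs.unique (hconn : X.Connected) {f' : X.Aut} {β' : List X.E} {g : Aut (X.Bar x₀)}
    (hg : X.ActsAs x₀ g f β) (hg' : X.ActsAs x₀ g f' β') :
    f = f' ∧ X.Homologous x₀ (f.toHom.vMap x₀) β β' := by
  obtain ⟨hβ, hgβ⟩ := actsAs_iff.1 hg
  obtain ⟨hβ', hgβ'⟩ := actsAs_iff.1 hg'
  obtain rfl : f = f' := hconn.covers_unique
    (covers_of_toHom_eq_barMapHom hgβ) (covers_of_toHom_eq_barMapHom hgβ')
  refine ⟨rfl, homologous_of_atom_eq hβ hβ' ?_⟩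
  rw [← barMapHom_baseAtom hβ, ← barMapHom_baseAtom hβ', ← hgβ, ← hgβ']

theorem exists_actsAs_of_mem_cov {g : Aut (X.Bar x₀)} (hg : g ∈ X.Cov x₀) :
    ∃ (f : X.Aut) (β : List X.E), X.ActsAs x₀ g f β := by
  obtain ⟨f, hf⟩ := hg
  obtain ⟨β, hβ, hbase⟩ := hf.exists_isPath_baseAtom
  refine ⟨f, β, actsAs_iff.2 ⟨hβ, barHom_ext (hf.trans (proj_comp_barMapHom hβ).symm) ?_⟩⟩
  rw [hbase, barMapHom_baseAtom]

end PairAction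

end SGraph

/-- Lemma: classification of covering symmetries.  For a connected
graph `X` with basepoint `x₀`, the map sending a pair `(f, ⟦β⟧)`, where `f ∈ Aut(X)`
and `β : x₀ → f(x₀)`, to the automorphism of the maximal abelian cover acting by
`⟦α⟧ ↦ ⟦β f(α)⟧` on atoms and `(⟦α⟧, e) ↦ (⟦β f(α)⟧, f(e))` on edges, is a bijection
from the set of such pairs onto `Cov(X)`: every pair determines an element of `Cov(X)`,
homologous choices of `β` (with the same `f`) determine the same element, distinct pairs
determine distinct elements, and every element of `Cov(X)` arises this way. -/
theorem cov_classification (X : SGraph) (hconn : X.Connected) (x₀ : X.V) :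
    (∀ (f : X.Aut) (β : List X.E), X.IsPath x₀ (f.toHom.vMap x₀) β →
      ∃ g : (X.Bar x₀).Aut, g ∈ X.Cov x₀ ∧ X.ActsAs x₀ g f β) ∧
    (∀ (f : X.Aut) (β β' : List X.E) (g g' : (X.Bar x₀).Aut),
      X.ActsAs x₀ g f β → X.ActsAs x₀ g' f β' →
      X.Homologous x₀ (f.toHom.vMap x₀) β β' → g = g') ∧
    (∀ (f f' : X.Aut) (β β' : List X.E) (g : (X.Bar x₀).Aut),
      X.ActsAs x₀ g f β → X.ActsAs x₀ g f' β' →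
      f = f' ∧ X.Homologous x₀ (f.toHom.vMap x₀) β β') ∧
    (∀ g ∈ X.Cov x₀, ∃ (f : X.Aut) (β : List X.E), X.ActsAs x₀ g f β) :=
  ⟨fun _ _ hβ => SGraph.exists_mem_cov_actsAs hβ,
    fun _ _ _ _ _ hg hg' h => hg.eq_of_homologous hg' h,
    fun _ _ _ _ _ hg hg' => hg.unique hconn hg',
    fun _ hg => SGraph.exists_actsAs_of_mem_cov hg⟩
end
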